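/- arXiv:1412.8142 — 2 statements merged into one kernel-verified Lean document; each statement's English description precedes it below -/
import Mathlib

section
/- For the Bianchi type VII_h manifold (subtype 1), the square norm of ∇φ equals 4(1-h²); in particular the manifold is isotropic-cosymplectic (‖∇φ‖ = 0) if and only if h = ±1. -/
noncomputable section

def e (i : Fin 3) : Fin 3 → ℝ := Pi.single i 1

def gB (x y : Fin 3 → ℝ) : ℝ := x 0 * y 0 - x 1 * y 1 + x 2 * y 2

/-- The almost contact endomorphism φ: φe₁ = e₂, φe₂ = -e₁, φe₃ = 0. -/
def phiF (x : Fin 3 → ℝ) : Fin 3 → ℝ := ![-(x 1), x 0, 0]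

/-- The inverse metric entries g¹¹=1, g²²=-1, g³³=1. -/
def ginv : Fin 3 → ℝ := ![1, -1, 1]

/-- The Lie bracket of Bia(VII_h), subtype (1). -/
def brVII (h : ℝ) (x y : Fin 3 → ℝ) : Fin 3 → ℝ :=
  ![(x 1 * y 2 - x 2 * y 1) + h * (x 2 * y 0 - x 0 * y 2),
    -h * (x 1 * y 2 - x 2 * y 1) + (x 2 * y 0 - x 0 * y 2),
    0]

/-- (∇ₓφ)y = ∇ₓ(φy) - φ(∇ₓy). -/
def nablaPhi (nabla : (Fin 3 → ℝ) →ₗ[ℝ] (Fin 3 → ℝ) →ₗ[ℝ] (Fin 3 → ℝ))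
    (x y : Fin 3 → ℝ) : Fin 3 → ℝ :=
  nabla x (phiF y) - phiF (nabla x y)

/-- for Bia(VII_h), subtype (1), ‖∇φ‖ = 4(1-h²); the manifold is
isotropic-cosymplectic (‖∇φ‖=0) iff h = ±1. -/
theorem stmt13 (h : ℝ)
    (nabla : (Fin 3 → ℝ) →ₗ[ℝ] (Fin 3 → ℝ) →ₗ[ℝ] (Fin 3 → ℝ))
    (hK : ∀ i j k : Fin 3,
      2 * gB (nabla (e i) (e j)) (e k) =
        gB (brVII h (e i) (e j)) (e k) + gB (brVII h (e k) (e i)) (e j)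
          + gB (brVII h (e k) (e j)) (e i)) :
    (∑ i, ∑ k, ginv i * ginv k *
        gB (nablaPhi nabla (e i) (e k)) (nablaPhi nabla (e i) (e k)))
      = 4 * (1 - h ^ 2) ∧
    ((∑ i, ∑ k, ginv i * ginv k *
        gB (nablaPhi nabla (e i) (e k)) (nablaPhi nabla (e i) (e k))) = 0
      ↔ (h = 1 ∨ h = -1)) := by
  have hph0 : phiF (e 0) = e 1 := by
    funext k; fin_cases k <;> simp [phiF, e, Pi.single_apply]
  have hph1 : phiF (e 1) = -(e 0) := by
    funext k; fin_cases k <;> simp [phiF, e, Pi.single_apply]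
  have hph2 : phiF (e 2) = 0 := by
    funext k; fin_cases k <;> simp [phiF, e, Pi.single_apply]
  have hN00 : nabla (e 0) (e 0) = (![0,0,h] : Fin 3 → ℝ) := by
    funext k
    have hk := hK 0 0 k
    fin_cases k <;>
      [have := hK 0 0 0; have := hK 0 0 1; have := hK 0 0 2] <;>
      simp [gB, brVII, e, Pi.single_apply] at this ⊢ <;> linarith
  have hN01 : nabla (e 0) (e 1) = (![0,0,-1] : Fin 3 → ℝ) := by
    funext k
    have hk := hK 0 1 k
    fin_cases k <;>
      [have := hK 0 1 0; have := hK 0 1 1; have := hK 0 1 2] <;>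
      simp [gB, brVII, e, Pi.single_apply] at this ⊢ <;> linarith
  have hN02 : nabla (e 0) (e 2) = (![-h,-1,0] : Fin 3 → ℝ) := by
    funext k
    have hk := hK 0 2 k
    fin_cases k <;>
      [have := hK 0 2 0; have := hK 0 2 1; have := hK 0 2 2] <;>
      simp [gB, brVII, e, Pi.single_apply] at this ⊢ <;> linarith
  have hN10 : nabla (e 1) (e 0) = (![0,0,-1] : Fin 3 → ℝ) := by
    funext k
    have hk := hK 1 0 k
    fin_cases k <;>
      [have := hK 1 0 0; have := hK 1 0 1; have := hK 1 0 2] <;>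
      simp [gB, brVII, e, Pi.single_apply] at this ⊢ <;> linarith
  have hN11 : nabla (e 1) (e 1) = (![0,0,-h] : Fin 3 → ℝ) := by
    funext k
    have hk := hK 1 1 k
    fin_cases k <;>
      [have := hK 1 1 0; have := hK 1 1 1; have := hK 1 1 2] <;>
      simp [gB, brVII, e, Pi.single_apply] at this ⊢ <;> linarith
  have hN12 : nabla (e 1) (e 2) = (![1,-h,0] : Fin 3 → ℝ) := by
    funext k
    have hk := hK 1 2 k
    fin_cases k <;>
      [have := hK 1 2 0; have := hK 1 2 1; have := hK 1 2 2] <;>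
      simp [gB, brVII, e, Pi.single_apply] at this ⊢ <;> linarith
  have hN20 : nabla (e 2) (e 0) = (![0,0,0] : Fin 3 → ℝ) := by
    funext k
    have hk := hK 2 0 k
    fin_cases k <;>
      [have := hK 2 0 0; have := hK 2 0 1; have := hK 2 0 2] <;>
      simp [gB, brVII, e, Pi.single_apply] at this ⊢ <;> linarith
  have hN21 : nabla (e 2) (e 1) = (![0,0,0] : Fin 3 → ℝ) := by
    funext k
    have hk := hK 2 1 k
    fin_cases k <;>
      [have := hK 2 1 0; have := hK 2 1 1; have := hK 2 1 2] <;>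
      simp [gB, brVII, e, Pi.single_apply] at this ⊢ <;> linarith
  have hN22 : nabla (e 2) (e 2) = (![0,0,0] : Fin 3 → ℝ) := by
    funext k
    have hk := hK 2 2 k
    fin_cases k <;>
      [have := hK 2 2 0; have := hK 2 2 1; have := hK 2 2 2] <;>
      simp [gB, brVII, e, Pi.single_apply] at this ⊢ <;> linarith
  have hEq : (∑ i, ∑ k, ginv i * ginv k *
        gB (nablaPhi nabla (e i) (e k)) (nablaPhi nabla (e i) (e k)))
      = 4 * (1 - h ^ 2) := by
    simp only [Fin.sum_univ_three, nablaPhi, hph0, hph1, hph2, map_neg, map_zero,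
      hN00, hN01, hN02, hN10, hN11, hN12, hN20, hN21, hN22]
    simp [gB, ginv, phiF]
    ring
  refine ⟨hEq, ?_⟩
  rw [hEq]
  constructor
  · intro H
    have h2 : (1 - h) * (1 + h) = 0 := by nlinarith
    rcases mul_eq_zero.mp h2 with h' | h'
    · left; linarith
    · right; linarith
  · rintro (rfl | rfl) <;> ring
end
end

section
/- For Bianchi type VII_h subtype (3) with brackets [e₁,e₂]=-he₁+e₃, [e₂,e₃]=e₁+he₃, [e₃,e₁]=0, metric g=diag(1,-1,1), and φe₁=e₂, φe₂=-e₁, φe₃=0, the square norm ‖∇φ‖ equals 2(5h²+1), which is strictly positive for all real h. -/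
noncomputable section

/-- The Lie bracket of Bia(VII_h), subtype (3):
[e₁,e₂]=-he₁+e₃, [e₂,e₃]=e₁+he₃, [e₃,e₁]=0. -/
def brVII3 (h : ℝ) (x y : Fin 3 → ℝ) : Fin 3 → ℝ :=
  ![-h * (x 0 * y 1 - x 1 * y 0) + (x 1 * y 2 - x 2 * y 1),
    0,
    (x 0 * y 1 - x 1 * y 0) + h * (x 1 * y 2 - x 2 * y 1)]

lemma e_val0 : e 0 = ![1,0,0] := by
  funext m; fin_cases m <;> simp [e, Pi.single_apply]

lemma e_val1 : e 1 = ![0,1,0] := by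
  funext m; fin_cases m <;> simp [e, Pi.single_apply]

lemma e_val2 : e 2 = ![0,0,1] := by
  funext m; fin_cases m <;> simp [e, Pi.single_apply]

lemma comp_eq (v : Fin 3 → ℝ) (m : Fin 3) : v m = ginv m * gB v (e m) := by
  fin_cases m <;> simp [gB, ginv, e, Pi.single_apply]

/-- for Bia(VII_h), subtype (3), ‖∇φ‖ = 2(5h²+1) > 0. -/
theorem stmt16 (h : ℝ)
    (nabla : (Fin 3 → ℝ) →ₗ[ℝ] (Fin 3 → ℝ) →ₗ[ℝ] (Fin 3 → ℝ))
    (hK : ∀ i j k : Fin 3,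
      2 * gB (nabla (e i) (e j)) (e k) =
        gB (brVII3 h (e i) (e j)) (e k) + gB (brVII3 h (e k) (e i)) (e j)
          + gB (brVII3 h (e k) (e j)) (e i)) :
    (∑ i, ∑ k, ginv i * ginv k *
        gB (nablaPhi nabla (e i) (e k)) (nablaPhi nabla (e i) (e k)))
      = 2 * (5 * h ^ 2 + 1) ∧
    0 < (∑ i, ∑ k, ginv i * ginv k *
        gB (nablaPhi nabla (e i) (e k)) (nablaPhi nabla (e i) (e k))) := by
  have key : ∀ i j m : Fin 3, nabla (e i) (e j) m =
      ginv m * ((gB (brVII3 h (e i) (e j)) (e m) + gB (brVII3 h (e m) (e i)) (e j)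
          + gB (brVII3 h (e m) (e j)) (e i)) / 2) := by
    intro i j m
    rw [comp_eq (nabla (e i) (e j)) m, show gB (nabla (e i) (e j)) (e m) =
      (gB (brVII3 h (e i) (e j)) (e m) + gB (brVII3 h (e m) (e i)) (e j)
          + gB (brVII3 h (e m) (e j)) (e i)) / 2 from by linarith [hK i j m]]
  have n00 : nabla (e 0) (e 0) = ![0, -h, 0] := by
    funext m; fin_cases m <;>
      (rw [key]; simp [ginv, gB, brVII3, e_val0, e_val1, e_val2]; try ring)
  have n01 : nabla (e 0) (e 1) = ![-h, 0, 0] := by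
    funext m; fin_cases m <;>
      (rw [key]; simp [ginv, gB, brVII3, e_val0, e_val1, e_val2]; try ring)
  have n02 : nabla (e 0) (e 2) = ![0, 0, 0] := by
    funext m; fin_cases m <;>
      (rw [key]; simp [ginv, gB, brVII3, e_val0, e_val1, e_val2]; try ring)
  have n10 : nabla (e 1) (e 0) = ![0, 0, -1] := by
    funext m; fin_cases m <;>
      (rw [key]; simp [ginv, gB, brVII3, e_val0, e_val1, e_val2]; try ring)
  have n11 : nabla (e 1) (e 1) = ![0, 0, 0] := by
    funext m; fin_cases m <;>
      (rw [key]; simp [ginv, gB, brVII3, e_val0, e_val1, e_val2]; try ring)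
  have n12 : nabla (e 1) (e 2) = ![1, 0, 0] := by
    funext m; fin_cases m <;>
      (rw [key]; simp [ginv, gB, brVII3, e_val0, e_val1, e_val2]; try ring)
  have n20 : nabla (e 2) (e 0) = ![0, 0, 0] := by
    funext m; fin_cases m <;>
      (rw [key]; simp [ginv, gB, brVII3, e_val0, e_val1, e_val2]; try ring)
  have n21 : nabla (e 2) (e 1) = ![0, 0, -h] := by
    funext m; fin_cases m <;>
      (rw [key]; simp [ginv, gB, brVII3, e_val0, e_val1, e_val2]; try ring)
  have n22 : nabla (e 2) (e 2) = ![0, -h, 0] := by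
    funext m; fin_cases m <;>
      (rw [key]; simp [ginv, gB, brVII3, e_val0, e_val1, e_val2]; try ring)
  have p0 : phiF (e 0) = e 1 := by
    funext m; fin_cases m <;> simp [phiF, e_val0, e_val1]
  have p1 : phiF (e 1) = -(e 0) := by
    funext m; fin_cases m <;> simp [phiF, e_val0, e_val1]
  have p2 : phiF (e 2) = 0 := by
    funext m; fin_cases m <;> simp [phiF, e_val2]
  have hsum : (∑ i, ∑ k, ginv i * ginv k *
        gB (nablaPhi nabla (e i) (e k)) (nablaPhi nabla (e i) (e k)))
      = 2 * (5 * h ^ 2 + 1) := by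
    simp only [Fin.sum_univ_three, nablaPhi, p0, p1, p2, map_neg, map_zero,
      n00, n01, n02, n10, n11, n12, n20, n21, n22]
    simp [gB, ginv, phiF]
    ring
  refine ⟨hsum, ?_⟩
  rw [hsum]
  positivity
end
end
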